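/- arXiv:2201.10288 — 7 statements merged into one kernel-verified Lean document; each statement's English description precedes it below -/
import Mathlib

section
/- For every real s ∈ (-4m², ∞) the value F_a(s) is real; the function s ↦ F_a(s) is strictly increasing on (-4m², ∞); and F_a(s) → +∞ as s → +∞. -/
/-! For real `s` the integrand is real. The kernel `1/(u+a) - 1/(u+s) = (s-a)/((u+a)(u+s))` is
`O(u⁻²)` at infinity, which makes the integrand integrable, and it is strictly increasing in `s`,
which makes `F_a` strictly increasing. For `u₀ ≤ u ≤ s` with `u₀` large, the weight is at least
`1/2` and the kernel at least `1/(6u)`, so `F_a(s) ≥ log (s / u₀) / 12 → ∞`. -/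

open MeasureTheory Complex Filter

/-- The half-line `(-∞, -4m²]` viewed as a subset of `ℂ`. -/
def cutSet (m : ℝ) : Set ℂ := {z : ℂ | z.im = 0 ∧ z.re ≤ -4 * m ^ 2}

/-- The function `F_a(z) = ∫_{4m²}^∞ √(1 - 4m²/u) (1/(u+a) - 1/(u+z)) du`. -/
noncomputable def Fa (m a : ℝ) (z : ℂ) : ℂ :=
  ∫ u in Set.Ioi (4 * m ^ 2), (Real.sqrt (1 - 4 * m ^ 2 / u) : ℂ) *
    (1 / ((u : ℂ) + (a : ℂ)) - 1 / ((u : ℂ) + z))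

open Set

theorem setIntegral_lt_setIntegral_of_forall_lt {X : Type*} [MeasurableSpace X] {μ : Measure X}
    {s : Set X} {f g : X → ℝ} (hs : MeasurableSet s) (hμs : μ s ≠ 0)
    (hf : IntegrableOn f s μ) (hg : IntegrableOn g s μ) (hfg : ∀ x ∈ s, f x < g x) :
    ∫ x in s, f x ∂μ < ∫ x in s, g x ∂μ := by
  have hpos : 0 < ∫ x in s, (g x - f x) ∂μ := by
    rw [setIntegral_pos_iff_support_of_nonneg_ae (f := fun x => g x - f x) ?_ (hg.sub hf)]
    · have hsupp : s ⊆ Function.support fun x => g x - f x :=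
        fun x hx => sub_ne_zero.mpr (hfg x hx).ne'
      rwa [inter_eq_self_of_subset_right hsupp, pos_iff_ne_zero]
    · filter_upwards [ae_restrict_mem hs] with x hx using sub_nonneg.mpr (hfg x hx).le
  rw [integral_sub hg hf] at hpos
  linarith

theorem integrableOn_Ioi_inv_add_sq {b c : ℝ} (h : 0 < b + c) :
    IntegrableOn (fun u : ℝ => ((u + c) ^ 2)⁻¹) (Ioi b) := by
  refine integrableOn_Ioi_deriv_of_nonneg' (g := fun u => -(u + c)⁻¹) (l := 0) ?_
    (fun u _ => by positivity) ?_
  · intro u hu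
    have hne : u + c ≠ 0 := by linarith [mem_Ici.mp hu]
    have hd := ((hasDerivAt_inv hne).comp_add_const u c).neg
    rwa [neg_neg] at hd
  · simpa using (tendsto_inv_atTop_zero.comp (tendsto_atTop_add_const_right _ c tendsto_id)).neg

theorem abs_one_div_add_sub_one_div_add_le {u a s : ℝ} (ha : 0 < u + a) (hs : 0 < u + s) :
    |1 / (u + a) - 1 / (u + s)| ≤ |s - a| * ((u + min a s) ^ 2)⁻¹ := by
  have hmin : 0 < u + min a s := by rcases min_choice a s with h | h <;> rw [h] <;> assumption
  have hsq : (u + min a s) ^ 2 ≤ (u + a) * (u + s) := by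
    rw [sq]
    exact mul_le_mul (by linarith [min_le_left a s]) (by linarith [min_le_right a s])
      hmin.le ha.le
  rw [div_sub_div _ _ ha.ne' hs.ne', one_mul, mul_one, add_sub_add_left_eq_sub, abs_div,
    abs_of_pos (mul_pos ha hs), div_eq_mul_inv]
  exact mul_le_mul_of_nonneg_left (inv_anti₀ (by positivity) hsq) (abs_nonneg _)

namespace Fa

noncomputable def integrand (m a s u : ℝ) : ℝ :=
  √(1 - 4 * m ^ 2 / u) * (1 / (u + a) - 1 / (u + s))

theorem apply_ofReal (m a s : ℝ) :
    Fa m a s = ((∫ u in Ioi (4 * m ^ 2), integrand m a s u : ℝ) : ℂ) := by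
  rw [Fa, ← integral_complex_ofReal]
  congr 1 with u
  push_cast [integrand]
  ring

variable {m a : ℝ}

theorem integrableOn_integrand {s : ℝ} (ha : -4 * m ^ 2 < a) (hs : -4 * m ^ 2 < s) :
    IntegrableOn (integrand m a s) (Ioi (4 * m ^ 2)) := by
  have hb : 0 < 4 * m ^ 2 + min a s := by
    rcases min_choice a s with h | h <;> rw [h] <;> linarith
  have hkernel : IntegrableOn (fun u : ℝ => 1 / (u + a) - 1 / (u + s)) (Ioi (4 * m ^ 2)) := by
    refine ((integrableOn_Ioi_inv_add_sq hb).const_mul |s - a|).mono' (by fun_prop) ?_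
    filter_upwards [ae_restrict_mem measurableSet_Ioi] with u hu
    exact abs_one_div_add_sub_one_div_add_le (by linarith [mem_Ioi.mp hu])
      (by linarith [mem_Ioi.mp hu])
  refine hkernel.bdd_mul (c := 1) (by fun_prop) ?_
  filter_upwards [ae_restrict_mem measurableSet_Ioi] with u hu
  have : 0 ≤ 4 * m ^ 2 / u := div_nonneg (by positivity) (by linarith [mem_Ioi.mp hu, sq_nonneg m])
  rw [Real.norm_eq_abs, abs_of_nonneg (Real.sqrt_nonneg _), Real.sqrt_le_one]
  linarith

theorem integrand_lt_integrand {s t u : ℝ} (hu : 4 * m ^ 2 < u) (hs : -u < s) (hst : s < t) :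
    integrand m a s u < integrand m a t u := by
  have hu0 : 0 < u := lt_of_le_of_lt (by positivity) hu
  have hsqrt : 0 < √(1 - 4 * m ^ 2 / u) := by
    rw [Real.sqrt_pos, sub_pos, div_lt_one hu0]
    exact hu
  have : 1 / (u + t) < 1 / (u + s) := one_div_lt_one_div_of_lt (by linarith) (by linarith)
  exact mul_lt_mul_of_pos_left (by linarith) hsqrt

theorem integrand_nonneg {s u : ℝ} (hu : 4 * m ^ 2 < u) (ha : -u < a) (has : a ≤ s) :
    0 ≤ integrand m a s u := by
  rcases has.eq_or_lt with rfl | has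
  · simp [integrand]
  · simpa [integrand] using (integrand_lt_integrand (a := a) hu ha has).le

theorem inv_le_integrand {s u : ℝ} (hu : 0 < u) (hmu : 8 * m ^ 2 ≤ u) (hau : 2 * |a| ≤ u)
    (hus : u ≤ s) : (12 * u)⁻¹ ≤ integrand m a s u := by
  have hsqrt : 1 / 2 ≤ √(1 - 4 * m ^ 2 / u) := by
    have h : 4 * m ^ 2 / u ≤ 1 / 2 := by
      rw [div_le_iff₀ hu]
      linarith
    rw [Real.le_sqrt (by norm_num) (by linarith)]
    linarith
  have hkernel : (6 * u)⁻¹ ≤ 1 / (u + a) - 1 / (u + s) := by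
    have ha : (3 * u / 2)⁻¹ ≤ 1 / (u + a) := by
      rw [one_div]
      exact inv_anti₀ (by linarith [neg_abs_le a]) (by linarith [le_abs_self a])
    have hs : 1 / (u + s) ≤ (2 * u)⁻¹ := by
      rw [one_div]
      exact inv_anti₀ (by positivity) (by linarith)
    calc (6 * u)⁻¹ = (3 * u / 2)⁻¹ - (2 * u)⁻¹ := by field_simp; ring
      _ ≤ 1 / (u + a) - 1 / (u + s) := sub_le_sub ha hs
  calc (12 * u)⁻¹ = 1 / 2 * (6 * u)⁻¹ := by ring
    _ ≤ integrand m a s u := mul_le_mul hsqrt hkernel (by positivity) (Real.sqrt_nonneg _)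

theorem log_div_le_integral_integrand {u₀ s : ℝ} (ha : -4 * m ^ 2 < a) (h₀ : 0 < u₀)
    (hmu : 8 * m ^ 2 ≤ u₀) (hau : 2 * |a| ≤ u₀) (hs : u₀ ≤ s) :
    Real.log (s / u₀) / 12 ≤ ∫ u in Ioi (4 * m ^ 2), integrand m a s u := by
  have hb : 4 * m ^ 2 < u₀ := by nlinarith [sq_nonneg m]
  have hint := integrableOn_integrand ha (s := s) (by nlinarith [sq_nonneg m])
  have hinv : IntegrableOn (fun u : ℝ => (12 * u)⁻¹) (Ioc u₀ s) := by
    refine (ContinuousOn.integrableOn_Icc ?_).mono_set Ioc_subset_Icc_self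
    exact (continuousOn_const.mul continuousOn_id).inv₀ fun u hu =>
      mul_ne_zero (by norm_num) (h₀.trans_le hu.1).ne'
  calc Real.log (s / u₀) / 12 = ∫ u in u₀..s, (12 * u)⁻¹ := by
        simp only [mul_inv]
        rw [intervalIntegral.integral_const_mul, integral_inv_of_pos h₀ (h₀.trans_le hs)]
        ring
    _ = ∫ u in Ioc u₀ s, (12 * u)⁻¹ := intervalIntegral.integral_of_le hs
    _ ≤ ∫ u in Ioc u₀ s, integrand m a s u :=
        setIntegral_mono_on hinv (hint.mono_set fun u hu => hb.trans hu.1) measurableSet_Ioc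
          fun u hu => inv_le_integrand (h₀.trans hu.1) (hmu.trans hu.1.le)
            (hau.trans hu.1.le) hu.2
    _ ≤ ∫ u in Ioi (4 * m ^ 2), integrand m a s u := by
        refine setIntegral_mono_set hint ?_ (Eventually.of_forall fun u hu => hb.trans hu.1)
        filter_upwards [ae_restrict_mem measurableSet_Ioi] with u hu
        exact integrand_nonneg hu (by linarith [mem_Ioi.mp hu]) (by linarith [le_abs_self a])

theorem tendsto_integral_integrand_atTop (ha : -4 * m ^ 2 < a) :
    Tendsto (fun s => ∫ u in Ioi (4 * m ^ 2), integrand m a s u) atTop atTop := by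
  set u₀ := 8 * m ^ 2 + 2 * |a| + 1
  have h₀ : 0 < u₀ := by positivity
  refine tendsto_atTop_mono' atTop ?_
    ((Real.tendsto_log_atTop.comp (tendsto_id.atTop_div_const h₀)).atTop_div_const
      (by norm_num : (0 : ℝ) < 12))
  filter_upwards [eventually_ge_atTop u₀] with s hs
  exact log_div_le_integral_integrand ha h₀ (by linarith [abs_nonneg a])
    (by linarith [sq_nonneg m]) hs

theorem strictMonoOn_integral_integrand (ha : -4 * m ^ 2 < a) :
    StrictMonoOn (fun s => ∫ u in Ioi (4 * m ^ 2), integrand m a s u) (Ioi (-4 * m ^ 2)) :=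
  fun s hs _ ht hst => setIntegral_lt_setIntegral_of_forall_lt measurableSet_Ioi (by simp)
    (integrableOn_integrand ha hs) (integrableOn_integrand ha ht)
    fun u hu => integrand_lt_integrand hu (by linarith [mem_Ioi.mp hs, mem_Ioi.mp hu]) hst

end Fa

theorem stmt_2_general (m a : ℝ) (ha : -4 * m ^ 2 < a) :
    (∀ s : ℝ, -4 * m ^ 2 < s → (Fa m a (s : ℂ)).im = 0) ∧
    StrictMonoOn (fun s : ℝ => (Fa m a (s : ℂ)).re) (Set.Ioi (-4 * m ^ 2)) ∧
    Filter.Tendsto (fun s : ℝ => (Fa m a (s : ℂ)).re) Filter.atTop Filter.atTop := by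
  have hre (s : ℝ) : (Fa m a s).re = ∫ u in Ioi (4 * m ^ 2), Fa.integrand m a s u := by
    rw [Fa.apply_ofReal, ofReal_re]
  refine ⟨fun s _ => by rw [Fa.apply_ofReal, ofReal_im], ?_, ?_⟩
  · simpa only [hre] using Fa.strictMonoOn_integral_integrand ha
  · simpa only [hre] using Fa.tendsto_integral_integrand_atTop ha

theorem stmt_2 (m a : ℝ) (hm : 0 < m) (ha : -4 * m ^ 2 < a) :
    (∀ s : ℝ, -4 * m ^ 2 < s → (Fa m a (s : ℂ)).im = 0) ∧
    StrictMonoOn (fun s : ℝ => (Fa m a (s : ℂ)).re) (Set.Ioi (-4 * m ^ 2)) ∧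
    Filter.Tendsto (fun s : ℝ => (Fa m a (s : ℂ)).re) Filter.atTop Filter.atTop :=
  stmt_2_general m a ha
end

section
/- For every complex z not in (-∞, -4m²], the imaginary part of F_a satisfies Im(F_a(z)) = Im(z) · ∫_{4m²}^∞ √(1 - 4m²/u) · (1/|u + z|²) du; consequently Im(F_a(z)) > 0 whenever Im(z) > 0 and Im(F_a(z)) < 0 whenever Im(z) < 0, and Im(F_a(s)) = 0 for real s > -4m². -/
open MeasureTheory Complex Filter

open Set

/-! Since `1/(u+a)` is real and `Im (1/(u+z)) = -Im z / |u+z|²`, taking imaginary parts under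
the integral gives the formula; its integrand is positive on `(4m², ∞)`, which fixes the sign.
Everything converges because off the cut `|u+z| ≥ δ (1+u)` on `[4m², ∞)` for some `δ > 0`, so
the integrands are `O((1+u²)⁻¹)` there. -/

lemma ofReal_notMem_cutSet {m a : ℝ} (ha : -4 * m ^ 2 < a) : (a : ℂ) ∉ cutSet m :=
  fun h => h.2.not_gt (by simpa using ha)

lemma exists_pos_mul_one_add_le_norm_add {m : ℝ} {z : ℂ} (hz : z ∉ cutSet m) :
    ∃ δ > 0, ∀ u : ℝ, 4 * m ^ 2 ≤ u → δ * (1 + u) ≤ ‖(u : ℂ) + z‖ := by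
  obtain ⟨ε, hε, hεle⟩ : ∃ ε > 0, ∀ u : ℝ, 4 * m ^ 2 ≤ u → ε ≤ ‖(u : ℂ) + z‖ := by
    by_cases him : z.im = 0
    · have hre : -4 * m ^ 2 < z.re := not_le.mp fun h => hz ⟨him, h⟩
      refine ⟨4 * m ^ 2 + z.re, by linarith, fun u hu => ?_⟩
      calc 4 * m ^ 2 + z.re ≤ ((u : ℂ) + z).re := by simp; linarith
        _ ≤ ‖(u : ℂ) + z‖ := re_le_norm _
    · refine ⟨|z.im|, abs_pos.mpr him, fun u _ => ?_⟩
      simpa using abs_im_le_norm ((u : ℂ) + z)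
  refine ⟨min (1 / 2) (ε / (2 * ‖z‖ + 2)), by positivity, fun u hu => ?_⟩
  have hu0 : 0 ≤ u := le_trans (by positivity) hu
  have htri : u - ‖z‖ ≤ ‖(u : ℂ) + z‖ := by
    simpa [abs_of_nonneg hu0] using norm_sub_norm_le (u : ℂ) (-z)
  rcases le_total (2 * ‖z‖ + 1) u with hbig | hsmall
  · calc min (1 / 2) (ε / (2 * ‖z‖ + 2)) * (1 + u) ≤ 1 / 2 * (1 + u) := by
          gcongr; exact min_le_left _ _
      _ ≤ ‖(u : ℂ) + z‖ := by linarith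
  · calc min (1 / 2) (ε / (2 * ‖z‖ + 2)) * (1 + u) ≤ ε / (2 * ‖z‖ + 2) * (2 * ‖z‖ + 2) :=
          mul_le_mul (min_le_right _ _) (by linarith) (by positivity) (by positivity)
      _ = ε := div_mul_cancel₀ _ (by positivity)
      _ ≤ ‖(u : ℂ) + z‖ := hεle u hu

lemma ofReal_add_ne_zero_of_notMem_cutSet {m : ℝ} {z : ℂ} (hz : z ∉ cutSet m) {u : ℝ}
    (hu : 4 * m ^ 2 ≤ u) :
    (u : ℂ) + z ≠ 0 := by
  obtain ⟨δ, hδ, hδz⟩ := exists_pos_mul_one_add_le_norm_add hz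
  have hu0 : 0 ≤ u := le_trans (by positivity) hu
  exact norm_pos_iff.mp (lt_of_lt_of_le (by positivity) (hδz u hu))

lemma integrableOn_inv_norm_add_mul_inv_norm_add {m : ℝ} {w z : ℂ} (hw : w ∉ cutSet m)
    (hz : z ∉ cutSet m) :
    IntegrableOn (fun u : ℝ => ‖(u : ℂ) + w‖⁻¹ * ‖(u : ℂ) + z‖⁻¹) (Ioi (4 * m ^ 2)) := by
  obtain ⟨δ, hδ, hδw⟩ := exists_pos_mul_one_add_le_norm_add hw
  obtain ⟨η, hη, hηz⟩ := exists_pos_mul_one_add_le_norm_add hz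
  refine Integrable.mono' (integrable_inv_one_add_sq.const_mul (δ * η)⁻¹).integrableOn
    (by fun_prop) ((ae_restrict_iff' measurableSet_Ioi).mpr (ae_of_all _ fun u hu => ?_))
  have hu : 4 * m ^ 2 ≤ u := le_of_lt hu
  have hu0 : 0 ≤ u := le_trans (by positivity) hu
  have hprod : δ * η * (1 + u ^ 2) ≤ ‖(u : ℂ) + w‖ * ‖(u : ℂ) + z‖ :=
    calc δ * η * (1 + u ^ 2) ≤ (δ * (1 + u)) * (η * (1 + u)) := by
          have : 1 + u ^ 2 ≤ (1 + u) * (1 + u) := by nlinarith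
          nlinarith [mul_pos hδ hη]
      _ ≤ ‖(u : ℂ) + w‖ * ‖(u : ℂ) + z‖ :=
          mul_le_mul (hδw u hu) (hηz u hu) (by positivity) (norm_nonneg _)
  rw [Real.norm_of_nonneg (by positivity), ← mul_inv, ← mul_inv]
  exact inv_anti₀ (by positivity) hprod

lemma integrableOn_one_div_add_sub_one_div_add {m : ℝ} {w z : ℂ} (hw : w ∉ cutSet m)
    (hz : z ∉ cutSet m) :
    IntegrableOn (fun u : ℝ => 1 / ((u : ℂ) + w) - 1 / ((u : ℂ) + z)) (Ioi (4 * m ^ 2)) := by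
  refine Integrable.mono' ((integrableOn_inv_norm_add_mul_inv_norm_add hw hz).const_mul ‖z - w‖)
    (by fun_prop) ((ae_restrict_iff' measurableSet_Ioi).mpr (ae_of_all _ fun u hu => ?_))
  rw [div_sub_div _ _ (ofReal_add_ne_zero_of_notMem_cutSet hw (le_of_lt hu))
    (ofReal_add_ne_zero_of_notMem_cutSet hz (le_of_lt hu))]
  simp [div_eq_mul_inv, mul_comm ‖(u : ℂ) + z‖⁻¹]

lemma sqrt_one_sub_div_le_one (m : ℝ) {u : ℝ} (hu : 0 ≤ u) : √(1 - 4 * m ^ 2 / u) ≤ 1 :=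
  Real.sqrt_le_one.mpr (by linarith [div_nonneg (by positivity : (0 : ℝ) ≤ 4 * m ^ 2) hu])

lemma integrableOn_sqrt_mul {m : ℝ} {𝕜 : Type*} [RCLike 𝕜] {g : ℝ → 𝕜}
    (hg : IntegrableOn g (Ioi (4 * m ^ 2))) :
    IntegrableOn (fun u : ℝ => (√(1 - 4 * m ^ 2 / u) : 𝕜) * g u) (Ioi (4 * m ^ 2)) := by
  refine hg.bdd_mul (c := 1) (by fun_prop)
    ((ae_restrict_iff' measurableSet_Ioi).mpr (ae_of_all _ fun u hu => ?_))
  rw [RCLike.norm_ofReal, abs_of_nonneg (Real.sqrt_nonneg _)]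
  exact sqrt_one_sub_div_le_one m (le_trans (by positivity) (le_of_lt hu))

lemma integrableOn_Fa_integrand {m a : ℝ} (ha : -4 * m ^ 2 < a) {z : ℂ} (hz : z ∉ cutSet m) :
    IntegrableOn (fun u : ℝ => (√(1 - 4 * m ^ 2 / u) : ℂ) *
      (1 / ((u : ℂ) + (a : ℂ)) - 1 / ((u : ℂ) + z))) (Ioi (4 * m ^ 2)) :=
  integrableOn_sqrt_mul (integrableOn_one_div_add_sub_one_div_add (ofReal_notMem_cutSet ha) hz)

lemma integrableOn_sqrt_mul_one_div_norm_sq {m : ℝ} {z : ℂ} (hz : z ∉ cutSet m) :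
    IntegrableOn (fun u : ℝ => √(1 - 4 * m ^ 2 / u) * (1 / ‖(u : ℂ) + z‖ ^ 2))
      (Ioi (4 * m ^ 2)) := by
  have h := integrableOn_sqrt_mul (𝕜 := ℝ) (integrableOn_inv_norm_add_mul_inv_norm_add hz hz)
  simpa [sq] using h

lemma im_ofReal_mul_one_div_add_sub_one_div_add (r u a : ℝ) (z : ℂ) :
    ((r : ℂ) * (1 / ((u : ℂ) + (a : ℂ)) - 1 / ((u : ℂ) + z))).im
      = z.im * (r * (1 / ‖(u : ℂ) + z‖ ^ 2)) := by
  simp [Complex.sq_norm, ← ofReal_add]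
  ring

lemma im_Fa {m a : ℝ} (ha : -4 * m ^ 2 < a) {z : ℂ} (hz : z ∉ cutSet m) :
    (Fa m a z).im = z.im * ∫ u in Ioi (4 * m ^ 2),
      √(1 - 4 * m ^ 2 / u) * (1 / ‖(u : ℂ) + z‖ ^ 2) := by
  rw [Fa, ← integral_const_mul, ← RCLike.im_to_complex,
    ← integral_im (integrableOn_Fa_integrand ha hz)]
  simp only [RCLike.im_to_complex, im_ofReal_mul_one_div_add_sub_one_div_add]

lemma integral_sqrt_mul_one_div_norm_sq_pos {m : ℝ} {z : ℂ} (hz : z ∉ cutSet m) :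
    0 < ∫ u in Ioi (4 * m ^ 2), √(1 - 4 * m ^ 2 / u) * (1 / ‖(u : ℂ) + z‖ ^ 2) := by
  have hpos : ∀ u ∈ Ioi (4 * m ^ 2), 0 < √(1 - 4 * m ^ 2 / u) * (1 / ‖(u : ℂ) + z‖ ^ 2) := by
    intro u (hu : 4 * m ^ 2 < u)
    have hu0 : 0 < u := lt_of_le_of_lt (by positivity) hu
    have hsqrt : 0 < √(1 - 4 * m ^ 2 / u) :=
      Real.sqrt_pos.mpr (by rwa [sub_pos, div_lt_one hu0])
    have hnorm : 0 < ‖(u : ℂ) + z‖ :=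
      norm_pos_iff.mpr (ofReal_add_ne_zero_of_notMem_cutSet hz (le_of_lt hu))
    positivity
  rw [setIntegral_pos_iff_support_of_nonneg_ae
    ((ae_restrict_iff' measurableSet_Ioi).mpr (ae_of_all _ fun u hu => (hpos u hu).le))
    (integrableOn_sqrt_mul_one_div_norm_sq hz),
    inter_eq_right.mpr fun u hu => Function.mem_support.mpr (hpos u hu).ne', Real.volume_Ioi]
  exact ENNReal.zero_lt_top

theorem stmt_3_general (m a : ℝ) (ha : -4 * m ^ 2 < a) :
    ∀ z : ℂ, z ∉ cutSet m →
      ((Fa m a z).im = z.im * ∫ u in Set.Ioi (4 * m ^ 2),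
          Real.sqrt (1 - 4 * m ^ 2 / u) * (1 / ‖(u : ℂ) + z‖ ^ 2)) ∧
      (0 < z.im → 0 < (Fa m a z).im) ∧
      (z.im < 0 → (Fa m a z).im < 0) ∧
      (∀ s : ℝ, -4 * m ^ 2 < s → (Fa m a (s : ℂ)).im = 0) := by
  intro z hz
  have hI := integral_sqrt_mul_one_div_norm_sq_pos hz
  refine ⟨im_Fa ha hz, fun him => ?_, fun him => ?_, fun s hs => ?_⟩
  · rw [im_Fa ha hz]; exact mul_pos him hI
  · rw [im_Fa ha hz]; exact mul_neg_of_neg_of_pos him hI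
  · rw [im_Fa ha (ofReal_notMem_cutSet hs), ofReal_im, zero_mul]

theorem stmt_3 (m a : ℝ) (hm : 0 < m) (ha : -4 * m ^ 2 < a) :
    ∀ z : ℂ, z ∉ cutSet m →
      ((Fa m a z).im = z.im * ∫ u in Set.Ioi (4 * m ^ 2),
          Real.sqrt (1 - 4 * m ^ 2 / u) * (1 / ‖(u : ℂ) + z‖ ^ 2)) ∧
      (0 < z.im → 0 < (Fa m a z).im) ∧
      (z.im < 0 → (Fa m a z).im < 0) ∧
      (∀ s : ℝ, -4 * m ^ 2 < s → (Fa m a (s : ℂ)).im = 0) :=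
  stmt_3_general m a ha
end

section
/- The restriction of F_a to (-4m², ∞) is twice differentiable, its second derivative at s ∈ (-4m², ∞) equals −2 ∫_{4m²}^∞ √(1 - 4m²/u) · (u + s)^{-3} du, which is strictly negative; in particular F_a is strictly concave on (-4m², ∞). -/
open MeasureTheory Complex Filter

/-!
Twice differentiate under the integral sign. On `(4m², ∞)` the weight `√(1 - 4m²/u)` lies in
`(0, 1]`, and for `t` near a point `s > -4m²` the `t`-derivatives of the integrand are dominated
by multiples of `(u + t₀)⁻ᵏ` with `k ≥ 2` and `t₀ > -4m²` fixed, which are integrable on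
`(4m², ∞)`. Hence `F_a'' (s) = -2 ∫ √(1 - 4m²/u) (u + s)⁻³ du`, and this is negative because the
integrand is positive.
-/

open Set Metric

lemma integrableOn_Ioi_inv_add_pow {b t : ℝ} (hbt : 0 < b + t) {k : ℕ} (hk : 2 ≤ k) :
    IntegrableOn (fun u : ℝ => ((u + t) ^ k)⁻¹) (Ioi b) := by
  have hk' : -(k : ℝ) < -1 := by
    have : (2 : ℝ) ≤ k := by exact_mod_cast hk
    linarith
  refine (integrableOn_add_rpow_Ioi_of_lt hk' (by linarith : -t < b)).congr_fun
    (fun u hu => ?_) measurableSet_Ioi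
  have : 0 ≤ u + t := by linarith [hu.out]
  dsimp only
  rw [Real.rpow_neg this, Real.rpow_natCast]

lemma hasDerivAt_inv_add_pow (u : ℝ) {t : ℝ} (ht : u + t ≠ 0) (k : ℕ) :
    HasDerivAt (fun t => ((u + t) ^ k)⁻¹) (-k * ((u + t) ^ (k + 1))⁻¹) t := by
  have hpow : HasDerivAt (fun t => (u + t) ^ k) (k * (u + t) ^ (k - 1)) t := by
    simpa [Pi.pow_def] using ((hasDerivAt_id t).const_add u).pow k
  refine (hpow.inv (pow_ne_zero k ht)).congr_deriv ?_
  rcases k with _ | k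
  · simp
  · rw [Nat.add_sub_cancel]
    field_simp
    ring

theorem hasDerivAt_setIntegral_Ioi_of_norm_deriv_le {f f' : ℝ → ℝ → ℝ} {b s C : ℝ} {k : ℕ}
    (hk : 2 ≤ k) (hbs : 0 < b + s)
    (hf_meas : ∀ t, AEStronglyMeasurable (f t) (volume.restrict (Ioi b)))
    (hf_int : IntegrableOn (f s) (Ioi b))
    (hf'_meas : AEStronglyMeasurable (f' s) (volume.restrict (Ioi b)))
    (hf' : ∀ u ∈ Ioi b, ∀ t, 0 < b + t → HasDerivAt (f · u) (f' t u) t)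
    (hf'_le : ∀ u ∈ Ioi b, ∀ t, 0 < b + t → ‖f' t u‖ ≤ C * ((u + t) ^ k)⁻¹) :
    HasDerivAt (fun t => ∫ u in Ioi b, f t u) (∫ u in Ioi b, f' s u) s := by
  set ε := (b + s) / 2
  have hε : 0 < ε := by positivity
  have hball : ∀ t ∈ ball s ε, s - ε < t := fun t ht => by
    linarith [(abs_lt.1 (mem_ball_iff_norm.1 ht)).1]
  have hbε : b + (s - ε) = ε := by ring
  refine (hasDerivAt_integral_of_dominated_loc_of_deriv_le (ball_mem_nhds s hε)
    (Eventually.of_forall hf_meas) hf_int hf'_meas ?_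
    ((integrableOn_Ioi_inv_add_pow (hbε ▸ hε) hk).const_mul C) ?_).2
  · filter_upwards [ae_restrict_mem measurableSet_Ioi] with u hu t ht
    have hut : 0 < u + (s - ε) := by linarith [hu.out]
    have hus : 0 < u + s := by linarith
    have hC : 0 ≤ C :=
      nonneg_of_mul_nonneg_left ((norm_nonneg _).trans (hf'_le u hu s hbs)) (by positivity)
    calc ‖f' t u‖ ≤ C * ((u + t) ^ k)⁻¹ := hf'_le u hu t (by linarith [hball t ht])
      _ ≤ C * ((u + (s - ε)) ^ k)⁻¹ := by gcongr; exact (hball t ht).le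
  · filter_upwards [ae_restrict_mem measurableSet_Ioi] with u hu t ht
    exact hf' u hu t (by linarith [hball t ht])

section WeightedIntegrals

variable {w : ℝ → ℝ} {b C : ℝ}

lemma integrableOn_mul_inv_add_pow
    (hw : AEStronglyMeasurable w (volume.restrict (Ioi b))) (hwC : ∀ u ∈ Ioi b, ‖w u‖ ≤ C)
    {t : ℝ} (hbt : 0 < b + t) {k : ℕ} (hk : 2 ≤ k) :
    IntegrableOn (fun u => w u * ((u + t) ^ k)⁻¹) (Ioi b) :=
  (integrableOn_Ioi_inv_add_pow hbt hk).bdd_mul hw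
    ((ae_restrict_iff' measurableSet_Ioi).2 (Eventually.of_forall hwC))

lemma integrableOn_inv_add_sub_inv_add {a t : ℝ} (hba : 0 < b + a) (hbt : 0 < b + t) :
    IntegrableOn (fun u : ℝ => 1 / (u + a) - 1 / (u + t)) (Ioi b) := by
  have hbc : 0 < b + min a t := by
    rw [← min_add_add_left]
    exact lt_min hba hbt
  refine Integrable.mono' ((integrableOn_Ioi_inv_add_pow hbc le_rfl).const_mul |t - a|)
    (by fun_prop) ((ae_restrict_iff' measurableSet_Ioi).2 (Eventually.of_forall fun u hu => ?_))
  have hua : 0 < u + a := by linarith [hu.out]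
  have hut : 0 < u + t := by linarith [hu.out]
  have huc : 0 < u + min a t := by linarith [hu.out]
  have hsq : (u + min a t) ^ 2 ≤ (u + a) * (u + t) := by
    rw [sq]
    exact mul_le_mul (by linarith [min_le_left a t]) (by linarith [min_le_right a t])
      huc.le hua.le
  calc ‖1 / (u + a) - 1 / (u + t)‖ = |t - a| * ((u + a) * (u + t))⁻¹ := by
        rw [Real.norm_eq_abs, div_sub_div _ _ hua.ne' hut.ne', abs_div,
          abs_of_pos (mul_pos hua hut), div_eq_mul_inv]
        congr 2
        ring
    _ ≤ |t - a| * ((u + min a t) ^ 2)⁻¹ := by gcongr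

theorem hasDerivAt_setIntegral_mul_inv_add_sub_inv_add
    (hw : AEStronglyMeasurable w (volume.restrict (Ioi b))) (hwC : ∀ u ∈ Ioi b, ‖w u‖ ≤ C)
    {a s : ℝ} (hba : 0 < b + a) (hbs : 0 < b + s) :
    HasDerivAt (fun t => ∫ u in Ioi b, w u * (1 / (u + a) - 1 / (u + t)))
      (∫ u in Ioi b, w u * ((u + s) ^ 2)⁻¹) s := by
  refine hasDerivAt_setIntegral_Ioi_of_norm_deriv_le
    (f := fun t u => w u * (1 / (u + a) - 1 / (u + t))) (f' := fun t u => w u * ((u + t) ^ 2)⁻¹)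
    (C := C) le_rfl hbs
    (fun t => hw.mul (by fun_prop))
    ((integrableOn_inv_add_sub_inv_add hba hbs).bdd_mul hw
      ((ae_restrict_iff' measurableSet_Ioi).2 (Eventually.of_forall hwC)))
    (hw.mul (by fun_prop)) (fun u hu t ht => ?_) (fun u hu t ht => ?_)
  · have hut : u + t ≠ 0 := by linarith [hu.out]
    simpa [one_div] using ((hasDerivAt_inv_add_pow u hut 1).const_sub (u + a)⁻¹).const_mul (w u)
  · have hut : 0 < u + t := by linarith [hu.out]
    rw [norm_mul, norm_inv, norm_pow, Real.norm_of_nonneg hut.le]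
    exact mul_le_mul_of_nonneg_right (hwC u hu) (by positivity)

theorem hasDerivAt_setIntegral_mul_inv_add_pow
    (hw : AEStronglyMeasurable w (volume.restrict (Ioi b))) (hwC : ∀ u ∈ Ioi b, ‖w u‖ ≤ C)
    {s : ℝ} (hbs : 0 < b + s) {k : ℕ} (hk : 2 ≤ k) :
    HasDerivAt (fun t => ∫ u in Ioi b, w u * ((u + t) ^ k)⁻¹)
      (-k * ∫ u in Ioi b, w u * ((u + s) ^ (k + 1))⁻¹) s := by
  rw [← integral_const_mul]
  refine hasDerivAt_setIntegral_Ioi_of_norm_deriv_le (f := fun t u => w u * ((u + t) ^ k)⁻¹)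
    (f' := fun t u => -k * (w u * ((u + t) ^ (k + 1))⁻¹)) (C := k * C) (hk.trans k.le_succ) hbs
    (fun t => hw.mul (by fun_prop)) (integrableOn_mul_inv_add_pow hw hwC hbs hk)
    ((hw.mul (by fun_prop)).const_mul _) (fun u hu t ht => ?_) (fun u hu t ht => ?_)
  · have hut : u + t ≠ 0 := by linarith [hu.out]
    exact ((hasDerivAt_inv_add_pow u hut k).const_mul (w u)).congr_deriv (by ring)
  · have hut : 0 < u + t := by linarith [hu.out]
    rw [norm_mul, norm_mul, norm_neg, Real.norm_natCast, norm_inv, norm_pow,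
      Real.norm_of_nonneg hut.le, mul_assoc]
    gcongr
    exact hwC u hu

lemma setIntegral_mul_inv_add_pow_pos
    (hw : AEStronglyMeasurable w (volume.restrict (Ioi b))) (hwC : ∀ u ∈ Ioi b, ‖w u‖ ≤ C)
    (hw_pos : ∀ u ∈ Ioi b, 0 < w u) {s : ℝ} (hbs : 0 < b + s) {k : ℕ} (hk : 2 ≤ k) :
    0 < ∫ u in Ioi b, w u * ((u + s) ^ k)⁻¹ := by
  have hpos : ∀ u ∈ Ioi b, 0 < w u * ((u + s) ^ k)⁻¹ := fun u hu => by
    have : 0 < u + s := by linarith [hu.out]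
    exact mul_pos (hw_pos u hu) (by positivity)
  have hsupp : Ioi b ⊆ Function.support fun u => w u * ((u + s) ^ k)⁻¹ :=
    fun u hu => (hpos u hu).ne'
  rw [setIntegral_pos_iff_support_of_nonneg_ae
    ((ae_restrict_iff' measurableSet_Ioi).2 (Eventually.of_forall fun u hu => (hpos u hu).le))
    (integrableOn_mul_inv_add_pow hw hwC hbs hk), inter_eq_right.2 hsupp]
  simp

end WeightedIntegrals

lemma sqrt_one_sub_div_pos {c u : ℝ} (hc : 0 ≤ c) (hu : c < u) : 0 < √(1 - c / u) :=
  Real.sqrt_pos.2 (by rw [sub_pos, div_lt_one (hc.trans_lt hu)]; exact hu)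

lemma norm_sqrt_one_sub_div_le_one {c u : ℝ} (hc : 0 ≤ c) (hu : c < u) : ‖√(1 - c / u)‖ ≤ 1 := by
  rw [Real.norm_of_nonneg (Real.sqrt_nonneg _), Real.sqrt_le_one]
  have : 0 ≤ c / u := div_nonneg hc (hc.trans hu.le)
  linarith

lemma re_Fa_ofReal (m a t : ℝ) :
    (Fa m a t).re = ∫ u in Ioi (4 * m ^ 2), √(1 - 4 * m ^ 2 / u) * (1 / (u + a) - 1 / (u + t)) := by
  have h : ∀ u : ℝ, (√(1 - 4 * m ^ 2 / u) : ℂ) * (1 / ((u : ℂ) + a) - 1 / ((u : ℂ) + t))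
      = ((√(1 - 4 * m ^ 2 / u) * (1 / (u + a) - 1 / (u + t)) : ℝ) : ℂ) := fun u => by
    push_cast; ring
  simp_rw [Fa, h, integral_complex_ofReal, ofReal_re]

theorem stmt_6_general (m a : ℝ) (ha : -4 * m ^ 2 < a) :
    (∀ s ∈ Set.Ioi (-4 * m ^ 2 : ℝ),
      DifferentiableAt ℝ (fun t : ℝ => (Fa m a (t : ℂ)).re) s ∧
      HasDerivAt (deriv (fun t : ℝ => (Fa m a (t : ℂ)).re))
        (-2 * ∫ u in Set.Ioi (4 * m ^ 2),
          Real.sqrt (1 - 4 * m ^ 2 / u) * ((u + s) ^ 3)⁻¹) s ∧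
      (-2 * ∫ u in Set.Ioi (4 * m ^ 2),
          Real.sqrt (1 - 4 * m ^ 2 / u) * ((u + s) ^ 3)⁻¹) < 0) ∧
    StrictConcaveOn ℝ (Set.Ioi (-4 * m ^ 2)) (fun t : ℝ => (Fa m a (t : ℂ)).re) := by
  have hc : 0 ≤ 4 * m ^ 2 := by positivity
  have hw : AEStronglyMeasurable (fun u : ℝ => √(1 - 4 * m ^ 2 / u))
      (volume.restrict (Ioi (4 * m ^ 2))) := by fun_prop
  have hw_le := fun u (hu : u ∈ Ioi (4 * m ^ 2)) => norm_sqrt_one_sub_div_le_one hc hu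
  have hmem : ∀ s ∈ Ioi (-4 * m ^ 2), 0 < 4 * m ^ 2 + s := fun s hs => by linarith [hs.out]
  have hF : ∀ s ∈ Ioi (-4 * m ^ 2), HasDerivAt (fun t : ℝ => (Fa m a t).re)
      (∫ u in Ioi (4 * m ^ 2), √(1 - 4 * m ^ 2 / u) * ((u + s) ^ 2)⁻¹) s := fun s hs => by
    simpa only [re_Fa_ofReal] using
      hasDerivAt_setIntegral_mul_inv_add_sub_inv_add hw hw_le (by linarith) (hmem s hs)
  have hF' : ∀ s ∈ Ioi (-4 * m ^ 2), HasDerivAt (deriv fun t : ℝ => (Fa m a t).re)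
      (-2 * ∫ u in Ioi (4 * m ^ 2), √(1 - 4 * m ^ 2 / u) * ((u + s) ^ 3)⁻¹) s := fun s hs =>
    (by simpa using hasDerivAt_setIntegral_mul_inv_add_pow hw hw_le (hmem s hs) le_rfl :
      HasDerivAt _ _ s).congr_of_eventuallyEq <|
      eventually_of_mem (isOpen_Ioi.mem_nhds hs) fun t ht => (hF t ht).deriv
  have hneg : ∀ s ∈ Ioi (-4 * m ^ 2),
      -2 * ∫ u in Ioi (4 * m ^ 2), √(1 - 4 * m ^ 2 / u) * ((u + s) ^ 3)⁻¹ < 0 := fun s hs =>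
    mul_neg_of_neg_of_pos (by norm_num) (setIntegral_mul_inv_add_pow_pos hw hw_le
      (fun u hu => sqrt_one_sub_div_pos hc hu) (hmem s hs) (by norm_num))
  refine ⟨fun s hs => ⟨(hF s hs).differentiableAt, hF' s hs, hneg s hs⟩,
    strictConcaveOn_of_deriv2_neg (convex_Ioi _)
      (fun t ht => (hF t ht).continuousAt.continuousWithinAt) fun s hs => ?_⟩
  rw [interior_Ioi] at hs
  change deriv (deriv fun t : ℝ => (Fa m a t).re) s < 0
  exact (hF' s hs).deriv ▸ hneg s hs

theorem stmt_6 (m a : ℝ) (hm : 0 < m) (ha : -4 * m ^ 2 < a) :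
    (∀ s ∈ Set.Ioi (-4 * m ^ 2 : ℝ),
      DifferentiableAt ℝ (fun t : ℝ => (Fa m a (t : ℂ)).re) s ∧
      HasDerivAt (deriv (fun t : ℝ => (Fa m a (t : ℂ)).re))
        (-2 * ∫ u in Set.Ioi (4 * m ^ 2),
          Real.sqrt (1 - 4 * m ^ 2 / u) * ((u + s) ^ 3)⁻¹) s ∧
      (-2 * ∫ u in Set.Ioi (4 * m ^ 2),
          Real.sqrt (1 - 4 * m ^ 2 / u) * ((u + s) ^ 3)⁻¹) < 0) ∧
    StrictConcaveOn ℝ (Set.Ioi (-4 * m ^ 2)) (fun t : ℝ => (Fa m a (t : ℂ)).re) :=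
  stmt_6_general m a ha
end

section
/- For every complex z in the domain ℂ \ (-∞, -4m²] with S(z) = 0 one has the identity |λ₁ + λ₂ z|² · κ · Im(F_a(z)) = −(g₂λ₁ − λ₂g₁) · Im(z). -/
open MeasureTheory Complex Filter

/-- The function `S(z) = -(λ₁ + λ₂ z) κ F_a(z) - (g₁ + g₂ z)`. -/
noncomputable def Sfun (m a κ g₁ g₂ l₁ l₂ : ℝ) (z : ℂ) : ℂ :=
  -((l₁ : ℂ) + (l₂ : ℂ) * z) * (κ : ℂ) * Fa m a z - ((g₁ : ℂ) + (g₂ : ℂ) * z)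

/- Only the algebraic shape of `S` matters: `S(z) = 0` says `w · (κ F_a(z)) = -(g₁ + g₂ z)` with
`w = λ₁ + λ₂ z`; multiplying by `conj w` makes the left side `|w|² κ F_a(z)`, and the imaginary
part of `conj (λ₁ + λ₂ z) · (g₁ + g₂ z)` is `(g₂ λ₁ - λ₂ g₁) Im z`. -/

open ComplexConjugate

theorem Complex.norm_sq_mul_im_eq_im_conj_mul {w c v : ℂ} (h : w * c = v) :
    ‖w‖ ^ 2 * c.im = (conj w * v).im := by
  rw [← h, ← mul_assoc, ← Complex.normSq_eq_conj_mul_self, Complex.im_ofReal_mul,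
    Complex.normSq_eq_norm_sq]

theorem Complex.im_conj_affine_mul_affine (a b c d : ℝ) (z : ℂ) :
    (conj ((a : ℂ) + b * z) * ((c : ℂ) + d * z)).im = (a * d - b * c) * z.im := by
  simp only [map_add, map_mul, Complex.conj_ofReal, Complex.mul_im, Complex.add_im,
    Complex.add_re, Complex.mul_re, Complex.ofReal_re, Complex.ofReal_im, Complex.conj_re,
    Complex.conj_im]
  ring

theorem Sfun_eq_zero_iff (m a κ g₁ g₂ l₁ l₂ : ℝ) (z : ℂ) :
    Sfun m a κ g₁ g₂ l₁ l₂ z = 0 ↔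
      ((l₁ : ℂ) + l₂ * z) * (κ * Fa m a z) = -((g₁ : ℂ) + g₂ * z) := by
  rw [Sfun, sub_eq_zero, ← neg_eq_iff_eq_neg, ← mul_assoc, neg_mul, neg_mul]

theorem stmt_10_general (m a κ g₁ g₂ l₁ l₂ : ℝ) :
    ∀ z : ℂ, z ∉ cutSet m → Sfun m a κ g₁ g₂ l₁ l₂ z = 0 →
      ‖(l₁ : ℂ) + (l₂ : ℂ) * z‖ ^ 2 * κ * (Fa m a z).im =
        -(g₂ * l₁ - l₂ * g₁) * z.im := by
  intro z _ hS
  have key := Complex.norm_sq_mul_im_eq_im_conj_mul ((Sfun_eq_zero_iff ..).1 hS)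
  rw [Complex.im_ofReal_mul, mul_neg, Complex.neg_im, Complex.im_conj_affine_mul_affine] at key
  rw [mul_assoc, key]
  ring

theorem stmt_10 (m a lam hb κ g₁ g₂ l₁ l₂ : ℝ) (hm : 0 < m) (ha : -4 * m ^ 2 < a)
    (hlam : 0 < lam) (hhb : 0 < hb) (hκ : κ = lam * hb / (16 * Real.pi ^ 2)) :
    ∀ z : ℂ, z ∉ cutSet m → Sfun m a κ g₁ g₂ l₁ l₂ z = 0 →
      ‖(l₁ : ℂ) + (l₂ : ℂ) * z‖ ^ 2 * κ * (Fa m a z).im =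
        -(g₂ * l₁ - l₂ * g₁) * z.im :=
  stmt_10_general m a κ g₁ g₂ l₁ l₂
end

section
/- Let f : ℝ → ℂ be a Schwartz function and for t > 0 define W(t) = ∫_0^∞ f(p) · e^{ipt} · p dp. Then t² · W(t) → −f(0) as t → +∞; in particular W(t) decays as 1/t² for large times. -/
/-!
Write `F φ t = ∫_{p > 0} φ p e^{ipt} dp` for a Schwartz function `φ`. Integrating by parts,
`F φ' t + i t F φ t = -φ 0`, which at once gives `F φ t = O(1/t)`, so `F φ t → 0`.
Apply this to `φ p = p f p`: since `φ 0 = 0` and `φ' 0 = f 0`, two integrations by parts give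
`t² F φ t = -f 0 - F φ'' t`, and the last term tends to `0`.
-/

open MeasureTheory Complex Filter Topology Set SchwartzMap

lemma norm_exp_I_mul_ofReal_mul_ofReal (p t : ℝ) : ‖exp (I * p * t)‖ = 1 := by
  rw [show I * p * t = ((p * t : ℝ) : ℂ) * I by push_cast; ring, norm_exp_ofReal_mul_I]

lemma hasDerivAt_exp_I_mul_ofReal_mul (t p : ℝ) :
    HasDerivAt (fun p : ℝ => exp (I * p * t)) (exp (I * p * t) * (I * t)) p := by
  have h : HasDerivAt (fun p : ℝ => I * p * t) (I * t) p := by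
    simpa using (((hasDerivAt_id p).ofReal_comp).const_mul I).mul_const (t : ℂ)
  exact h.cexp

noncomputable def halfLineFourier (φ : 𝓢(ℝ, ℂ)) (t : ℝ) : ℂ :=
  ∫ p in Ioi 0, φ p * exp (I * p * t)

namespace halfLineFourier

variable (φ : 𝓢(ℝ, ℂ))

lemma integrableOn (t : ℝ) : IntegrableOn (fun p : ℝ => φ p * exp (I * p * t)) (Ioi 0) := by
  refine Integrable.mul_bdd (c := 1) φ.integrable.restrict ?_ ?_
  · exact (continuous_exp.comp (by fun_prop)).aestronglyMeasurable
  · exact Eventually.of_forall fun p => (norm_exp_I_mul_ofReal_mul_ofReal p t).le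

lemma norm_le (t : ℝ) : ‖halfLineFourier φ t‖ ≤ ∫ p in Ioi 0, ‖φ p‖ :=
  (norm_integral_le_integral_norm _).trans_eq <| integral_congr_ae <| Eventually.of_forall
    fun p => by simp only [norm_mul, norm_exp_I_mul_ofReal_mul_ofReal, mul_one]

lemma derivCLM_add_I_mul (t : ℝ) :
    halfLineFourier (derivCLM ℝ ℂ φ) t + I * t * halfLineFourier φ t = -φ 0 := by
  have hderiv (p : ℝ) : HasDerivAt (fun p : ℝ => φ p * exp (I * p * t))
      (derivCLM ℝ ℂ φ p * exp (I * p * t) + I * t * (φ p * exp (I * p * t))) p :=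
    ((φ.hasDerivAt p).mul (hasDerivAt_exp_I_mul_ofReal_mul t p)).congr_deriv <| by
      rw [derivCLM_apply]; ring
  have hint := (integrableOn (derivCLM ℝ ℂ φ) t).add ((integrableOn φ t).const_mul (I * t))
  have hlim : Tendsto (fun p : ℝ => φ p * exp (I * p * t)) atTop (𝓝 0) := by
    have hφ : Tendsto φ atTop (𝓝 0) :=
      φ.toZeroAtInfty.zero_at_infty'.mono_left atTop_le_cocompact
    exact hφ.zero_mul_isBoundedUnder_le ⟨1, eventually_map.2 <| Eventually.of_forall fun p =>
      (norm_exp_I_mul_ofReal_mul_ofReal p t).le⟩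
  have h := integral_Ioi_of_hasDerivAt_of_tendsto (hderiv 0).continuousAt.continuousWithinAt
    (fun p _ => hderiv p) hint hlim
  rw [integral_add (integrableOn (derivCLM ℝ ℂ φ) t) ((integrableOn φ t).const_mul _),
    integral_const_mul, zero_sub] at h
  simpa only [halfLineFourier, derivCLM_apply, ofReal_zero, mul_zero, zero_mul, exp_zero,
    mul_one] using h

lemma tendsto_atTop_zero : Tendsto (halfLineFourier φ) atTop (𝓝 0) := by
  refine squeeze_zero_norm' (a := ((‖φ 0‖ + ∫ p in Ioi 0, ‖derivCLM ℝ ℂ φ p‖) / ·)) ?_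
    (tendsto_const_nhds.div_atTop tendsto_id)
  filter_upwards [eventually_gt_atTop 0] with t ht
  rw [le_div_iff₀ ht]
  calc ‖halfLineFourier φ t‖ * t = ‖I * t * halfLineFourier φ t‖ := by
        rw [norm_mul, norm_mul, norm_I, one_mul, norm_real, Real.norm_of_nonneg ht.le, mul_comm]
    _ = ‖-φ 0 - halfLineFourier (derivCLM ℝ ℂ φ) t‖ := by
        rw [← derivCLM_add_I_mul φ t]; ring_nf
    _ ≤ ‖φ 0‖ + ∫ p in Ioi 0, ‖derivCLM ℝ ℂ φ p‖ := by
        grw [norm_sub_le, norm_neg, norm_le]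

lemma sq_mul_eq_of_apply_zero {φ : 𝓢(ℝ, ℂ)} (hφ : φ 0 = 0) (t : ℝ) :
    (t : ℂ) ^ 2 * halfLineFourier φ t =
      -derivCLM ℝ ℂ φ 0 - halfLineFourier (derivCLM ℝ ℂ (derivCLM ℝ ℂ φ)) t := by
  have h₀ := derivCLM_add_I_mul φ t
  have h₁ := derivCLM_add_I_mul (derivCLM ℝ ℂ φ) t
  rw [hφ, neg_zero] at h₀
  linear_combination (-(I * t)) * h₀ + h₁ + (halfLineFourier φ t * (t : ℂ) ^ 2) * I_sq

lemma tendsto_sq_mul_of_apply_zero {φ : 𝓢(ℝ, ℂ)} (hφ : φ 0 = 0) :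
    Tendsto (fun t : ℝ => (t : ℂ) ^ 2 * halfLineFourier φ t) atTop
      (𝓝 (-derivCLM ℝ ℂ φ 0)) := by
  simp_rw [sq_mul_eq_of_apply_zero hφ]
  simpa using tendsto_const_nhds.sub (tendsto_atTop_zero (derivCLM ℝ ℂ (derivCLM ℝ ℂ φ)))

end halfLineFourier

lemma derivCLM_smulLeftCLM_ofReal_apply_zero (f : 𝓢(ℝ, ℂ)) :
    derivCLM ℝ ℂ (smulLeftCLM ℂ ofReal f) 0 = f 0 := by
  have h : HasDerivAt (fun x : ℝ => (x : ℂ) * f x) (f 0) 0 :=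
    (((hasDerivAt_id (0 : ℝ)).ofReal_comp).mul (f.hasDerivAt 0)).congr_deriv (by simp)
  rw [derivCLM_apply, smulLeftCLM_apply Function.Complex.hasTemperateGrowth_ofReal]
  exact h.deriv

theorem stmt_11 (f : SchwartzMap ℝ ℂ) :
    Filter.Tendsto
      (fun t : ℝ => (t : ℂ) ^ 2 *
        ∫ p in Set.Ioi (0 : ℝ), f p * Complex.exp (Complex.I * p * t) * p)
      Filter.atTop (nhds (-(f 0))) := by
  set φ := smulLeftCLM ℂ ofReal f
  have hW (t : ℝ) : ∫ p in Ioi (0 : ℝ), f p * exp (I * p * t) * p = halfLineFourier φ t := by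
    refine integral_congr_ae (Eventually.of_forall fun p => ?_)
    simp only [φ, smulLeftCLM_apply_apply Function.Complex.hasTemperateGrowth_ofReal, smul_eq_mul]
    ring
  simp_rw [hW]
  rw [← derivCLM_smulLeftCLM_ofReal_apply_zero f]
  exact halfLineFourier.tendsto_sq_mul_of_apply_zero
    (by simp [φ, Function.Complex.hasTemperateGrowth_ofReal])
end

section
/- Let ω > 0 and let t be a nonzero real number. Then lim_{ε→0⁺} (1/(2π)) ∫_{−∞}^{∞} e^{i t p} / ((p − iε)² − ω²) dp equals −sin(ω t)/ω if t > 0, and equals 0 if t < 0. -/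
/-!
For `a = ω + εi` and `b = -ω + εi` in the upper half-plane, the causal function
`K(s) = 1_{s > 0} · i/(a - b) · (e^{ias} - e^{ibs})` is a combination of decaying exponentials,
and its Fourier transform is `1/((2πq - a)(2πq - b))`. Both `K` and this transform are integrable
and `K` is continuous, so Fourier inversion turns the `p`-integral into `2π K(t)`.
As `ε → 0⁺`, `K(t)` tends to `i/(2ω) · (e^{iωt} - e^{-iωt}) = -sin(ωt)/ω` for `t > 0`
and stays `0` for `t ≤ 0`.
-/

open MeasureTheory Complex Filter Set Real FourierTransform Topology

lemma integrableOn_Ioi_cexp_I_mul {a : ℂ} (ha : 0 < a.im) :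
    IntegrableOn (fun s : ℝ => cexp (I * a * s)) (Ioi 0) :=
  integrableOn_exp_mul_complex_Ioi (by simpa using ha) 0

lemma integral_Ioi_cexp_I_mul {a : ℂ} (ha : 0 < a.im) :
    ∫ s in Ioi (0 : ℝ), cexp (I * a * s) = I / a := by
  have ha0 : a ≠ 0 := fun h => by simp [h] at ha
  rw [integral_exp_mul_complex_Ioi (by simpa using ha)]
  field_simp
  simp

lemma integrable_inv_norm_ofReal_sub_sq {z : ℂ} (hz : z.im ≠ 0) :
    Integrable fun x : ℝ => ‖(x : ℂ) - z‖⁻¹ ^ 2 := by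
  have h := ((integrable_inv_one_add_sq.comp_div hz).comp_sub_right z.re).const_mul (z.im ^ 2)⁻¹
  refine h.congr (Eventually.of_forall fun x => ?_)
  simp only [inv_pow, ← Complex.normSq_eq_norm_sq, Complex.normSq_apply, sub_re, ofReal_re,
    sub_im, ofReal_im, zero_sub]
  field_simp
  ring

lemma integrable_inv_mul_ofReal_sub {a b : ℂ} (ha : a.im ≠ 0) (hb : b.im ≠ 0) :
    Integrable fun x : ℝ => ((x - a) * (x - b))⁻¹ := by
  refine ((integrable_inv_norm_ofReal_sub_sq ha).add (integrable_inv_norm_ofReal_sub_sq hb)).mono'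
    (by fun_prop) (Eventually.of_forall fun x => ?_)
  rw [Pi.add_apply, norm_inv, norm_mul, mul_inv]
  nlinarith [sq_nonneg (‖(x : ℂ) - a‖⁻¹ - ‖(x : ℂ) - b‖⁻¹)]

noncomputable def retardedKernel (a b : ℂ) : ℝ → ℂ :=
  indicator (Ioi 0) fun s => I / (a - b) * (cexp (I * a * s) - cexp (I * b * s))

-- The bracket vanishes at `s = 0`, so the cut-off creates no jump.
lemma continuous_retardedKernel (a b : ℂ) : Continuous (retardedKernel a b) :=
  Continuous.indicator (by simp) (by fun_prop)

lemma integrable_retardedKernel {a b : ℂ} (ha : 0 < a.im) (hb : 0 < b.im) :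
    Integrable (retardedKernel a b) :=
  (integrable_indicator_iff measurableSet_Ioi).2
    (((integrableOn_Ioi_cexp_I_mul ha).sub (integrableOn_Ioi_cexp_I_mul hb)).const_mul _)

lemma fourier_retardedKernel {a b : ℂ} (ha : 0 < a.im) (hb : 0 < b.im) (hab : a ≠ b) (q : ℝ) :
    𝓕 (retardedKernel a b) q = ((2 * π * q - a) * (2 * π * q - b))⁻¹ := by
  set x : ℂ := 2 * π * q
  have hax : 0 < (a - x).im := by simpa [x] using ha
  have hbx : 0 < (b - x).im := by simpa [x] using hb
  have hshift : ∀ (w : ℂ) (s : ℝ),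
      cexp (↑(-2 * π * s * q) * I) * cexp (I * w * s) = cexp (I * (w - x) * s) := by
    intro w s
    rw [← Complex.exp_add]
    congr 1
    push_cast [x]
    ring
  rw [Real.fourier_real_eq_integral_exp_smul, retardedKernel, ← indicator_smul,
    integral_indicator measurableSet_Ioi]
  simp_rw [smul_eq_mul, mul_left_comm _ (I / (a - b)), mul_sub (cexp _), hshift]
  rw [integral_const_mul, integral_sub (integrableOn_Ioi_cexp_I_mul hax)
    (integrableOn_Ioi_cexp_I_mul hbx), integral_Ioi_cexp_I_mul hax, integral_Ioi_cexp_I_mul hbx]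
  have h1 : a - x ≠ 0 := fun h => by simp [h] at hax
  have h2 : b - x ≠ 0 := fun h => by simp [h] at hbx
  have h3 : a - b ≠ 0 := sub_ne_zero.2 hab
  rw [show x - a = -(a - x) by ring, show x - b = -(b - x) by ring]
  field_simp
  ring_nf
  simp only [I_sq]
  ring

lemma integrable_fourier_retardedKernel {a b : ℂ} (ha : 0 < a.im) (hb : 0 < b.im) (hab : a ≠ b) :
    Integrable (𝓕 (retardedKernel a b)) := by
  have h := (integrable_inv_mul_ofReal_sub ha.ne' hb.ne').comp_mul_left' (two_pi_pos.ne')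
  refine h.congr (Eventually.of_forall fun q => ?_)
  simp [fourier_retardedKernel ha hb hab]

theorem integral_cexp_div_mul_sub {a b : ℂ} (ha : 0 < a.im) (hb : 0 < b.im) (hab : a ≠ b)
    (t : ℝ) :
    ∫ p : ℝ, cexp (I * t * p) / ((p - a) * (p - b)) = 2 * π * retardedKernel a b t := by
  set g : ℝ → ℂ := fun p => cexp (I * t * p) / ((p - a) * (p - b))
  have hinv : 𝓕⁻ (𝓕 (retardedKernel a b)) t = ∫ q : ℝ, g (2 * π * q) := by
    rw [Real.fourierInv_eq']
    congr 1 with q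
    rw [fourier_retardedKernel ha hb hab, smul_eq_mul, Real.inner_apply]
    simp only [g, div_eq_mul_inv]
    push_cast
    ring_nf
  rw [← (integrable_retardedKernel ha hb).fourierInv_fourier_eq
    (integrable_fourier_retardedKernel ha hb hab) (continuous_retardedKernel a b).continuousAt,
    hinv, Measure.integral_comp_mul_left g, abs_of_pos (inv_pos.2 two_pi_pos), Complex.real_smul]
  push_cast
  field_simp

lemma continuousAt_retardedKernel_apply {a b : ℂ} (hab : a ≠ b) (t : ℝ) :
    ContinuousAt (fun z : ℂ × ℂ => retardedKernel z.1 z.2 t) (a, b) := by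
  by_cases ht : 0 < t
  · simp only [retardedKernel, indicator_of_mem (show t ∈ Ioi 0 from ht)]
    have : (a, b).1 - (a, b).2 ≠ 0 := sub_ne_zero.2 hab
    fun_prop (disch := assumption)
  · simp only [retardedKernel, indicator_of_notMem (show t ∉ Ioi 0 from ht)]
    exact continuousAt_const

lemma retardedKernel_ofReal_neg (ω t : ℝ) :
    retardedKernel ω (-ω) t = if 0 < t then ((-(Real.sin (ω * t)) / ω : ℝ) : ℂ) else 0 := by
  split_ifs with ht
  · simp only [retardedKernel, indicator_of_mem (show t ∈ Ioi 0 from ht)]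
    push_cast
    rw [Complex.sin]
    field_simp
    ring_nf
  · exact indicator_of_notMem (show t ∉ Ioi 0 from ht) _

theorem stmt_16_general (ω t : ℝ) (hω : 0 < ω) :
    Filter.Tendsto
      (fun ε : ℝ => (1 / (2 * Real.pi) : ℂ) *
        ∫ p : ℝ, Complex.exp (Complex.I * (t : ℂ) * (p : ℂ)) /
          (((p : ℂ) - (ε : ℂ) * Complex.I) ^ 2 - (ω : ℂ) ^ 2))
      (nhdsWithin 0 (Set.Ioi 0))
      (nhds (if 0 < t then ((-(Real.sin (ω * t)) / ω : ℝ) : ℂ) else 0)) := by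
  have hpoles : ∀ ε : ℝ, (ω + ε * I : ℂ) ≠ -ω + ε * I := fun ε h => by
    have := congrArg re h
    simp only [add_re, ofReal_re, mul_re, I_re, I_im, neg_re] at this
    linarith
  have hlim : Tendsto (fun ε : ℝ => retardedKernel (ω + ε * I) (-ω + ε * I) t) (𝓝[>] 0)
      (𝓝 (retardedKernel ω (-ω) t)) := by
    have hcurve : Tendsto (fun ε : ℝ => ((ω : ℂ) + ε * I, -(ω : ℂ) + ε * I)) (𝓝[>] 0)
        (𝓝 ((ω : ℂ), -(ω : ℂ))) := by
      have : Continuous fun ε : ℝ => ((ω : ℂ) + ε * I, -(ω : ℂ) + ε * I) := by fun_prop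
      simpa using (this.tendsto 0).mono_left nhdsWithin_le_nhds
    have hω' : (ω : ℂ) ≠ -ω := by simpa using hpoles 0
    exact ((continuousAt_retardedKernel_apply hω' t).tendsto.comp hcurve :)
  rw [← retardedKernel_ofReal_neg]
  refine hlim.congr' ?_
  filter_upwards [self_mem_nhdsWithin] with ε (hε : 0 < ε)
  have hfac : ∀ p : ℝ, ((p : ℂ) - ε * I) ^ 2 - ω ^ 2 = (p - (ω + ε * I)) * (p - (-ω + ε * I)) :=
    fun p => by ring
  simp_rw [hfac]
  rw [integral_cexp_div_mul_sub (by simpa) (by simpa) (hpoles ε)]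
  field_simp

theorem stmt_16 (ω t : ℝ) (hω : 0 < ω) (ht : t ≠ 0) :
    Filter.Tendsto
      (fun ε : ℝ => (1 / (2 * Real.pi) : ℂ) *
        ∫ p : ℝ, Complex.exp (Complex.I * (t : ℂ) * (p : ℂ)) /
          (((p : ℂ) - (ε : ℂ) * Complex.I) ^ 2 - (ω : ℂ) ^ 2))
      (nhdsWithin 0 (Set.Ioi 0))
      (nhds (if 0 < t then ((-(Real.sin (ω * t)) / ω : ℝ) : ℂ) else 0)) :=
  stmt_16_general ω t hω
end

section
/- Assume g₁, g₂, λ₁, λ₂ are all strictly positive, g₂λ₁ − λ₂g₁ ≥ 0, and −4m² < −λ₁/λ₂ < −g₁/g₂ < a < 0. Then every zero of S in the domain ℂ \ (−∞, −4m²] is real and strictly negative (it lies in (−4m², 0)), and the number of such zeros is either one or two; in particular at least one zero exists. -/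
/-!
For `z` off the cut, `Im F_a(z)` has the sign of `Im z`, because `Im (-1/(u+z)) = Im z / |u+z|²`.
Taking the imaginary part of `conj (λ₁ + λ₂ z) · S(z) = 0` then forces `Im z = 0` as soon as
`g₂λ₁ - λ₂g₁ ≥ 0`. On the half-line `(-4m², ∞)`, `F_a` is real, continuous, strictly increasing
and vanishes at `a`; hence `S < 0` on `[0, ∞)`, while `S(-λ₁/λ₂) > 0 > S(a)` gives a zero by the
intermediate value theorem. Finally, eliminating the `g`'s from `S(p) = S(q) = 0` gives
`(λ₁ + λ₂p)(λ₁ + λ₂q) κ (F_a(q) - F_a(p)) = -(q - p)(g₂λ₁ - λ₂g₁)`, which monotonicity of `F_a`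
rules out for `p < q` on the same side of `-λ₁/λ₂`: there is at most one zero on each side.
-/

open MeasureTheory Complex Filter

open Set

section

variable {m : ℝ}

lemma add_ne_zero_of_notMem_cutSet {z : ℂ} (hz : z ∉ cutSet m) {u : ℝ} (hu : 4 * m ^ 2 ≤ u) :
    (u : ℂ) + z ≠ 0 := by
  intro h
  have hzu : z = -(u : ℂ) := eq_neg_of_add_eq_zero_right h
  exact hz ⟨by simp [hzu], by simp [hzu]; linarith⟩

lemma ofReal_notMem_cutSet_s18 {x : ℝ} (hx : -4 * m ^ 2 < x) : (x : ℂ) ∉ cutSet m :=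
  fun h => (not_le.2 hx) (by simpa using h.2)

lemma exists_mul_le_norm_add (hm : m ≠ 0) {z : ℂ} (hz : z ∉ cutSet m) :
    ∃ ε > 0, ∀ u > 4 * m ^ 2, ε * u ≤ ‖(u : ℂ) + z‖ := by
  have ht : 0 < 4 * m ^ 2 := by positivity
  -- `‖u + z‖ = u ‖1 + z / u‖`, and `s ↦ ‖1 + s z‖` has a positive minimum on `[0, 1 / (4m²)]`.
  obtain ⟨s₀, ⟨hs₀, hs₀t⟩, hmin⟩ := isCompact_Icc.exists_isMinOn
    (nonempty_Icc.2 (one_div_pos.2 ht).le)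
    (Continuous.continuousOn (f := fun s : ℝ => ‖1 + (s : ℂ) * z‖) (by fun_prop))
  refine ⟨‖1 + (s₀ : ℂ) * z‖, norm_pos_iff.2 ?_, fun u hu => ?_⟩
  · rcases hs₀.eq_or_lt with rfl | hs₀
    · simp
    have hne := add_ne_zero_of_notMem_cutSet hz ((le_one_div hs₀ ht).1 hs₀t)
    have hs₀' : (s₀ : ℂ) ≠ 0 := by exact_mod_cast hs₀.ne'
    have : 1 + (s₀ : ℂ) * z = s₀ * (((1 / s₀ : ℝ) : ℂ) + z) := by
      push_cast
      field_simp
    rw [this]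
    exact mul_ne_zero hs₀' hne
  · have hu0 : 0 < u := ht.trans hu
    have hle := hmin ⟨one_div_nonneg.2 hu0.le, one_div_le_one_div_of_le ht hu.le⟩
    have hu' : (u : ℂ) ≠ 0 := by exact_mod_cast hu0.ne'
    have : (u : ℂ) + z = u * (1 + ((1 / u : ℝ) : ℂ) * z) := by
      push_cast
      field_simp
    rw [this, norm_mul, norm_real, Real.norm_of_nonneg hu0.le, mul_comm]
    exact mul_le_mul_of_nonneg_left hle hu0.le

noncomputable def faIntegrand (m : ℝ) (w z : ℂ) (u : ℝ) : ℂ :=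
  (Real.sqrt (1 - 4 * m ^ 2 / u) : ℂ) * (1 / ((u : ℂ) + w) - 1 / ((u : ℂ) + z))

lemma Fa_eq_integral (a : ℝ) (z : ℂ) :
    Fa m a z = ∫ u in Ioi (4 * m ^ 2), faIntegrand m a z u := rfl

lemma sqrt_one_sub_div_pos_s18 {u : ℝ} (hu : 4 * m ^ 2 < u) : 0 < Real.sqrt (1 - 4 * m ^ 2 / u) :=
  Real.sqrt_pos.2 (sub_pos.2 ((div_lt_one ((by positivity : (0 : ℝ) ≤ _).trans_lt hu)).2 hu))

lemma norm_faIntegrand_le {w z : ℂ} {u εw εz : ℝ} (hu : 4 * m ^ 2 < u) (hεw : 0 < εw)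
    (hεz : 0 < εz) (hw : εw * u ≤ ‖(u : ℂ) + w‖) (hz : εz * u ≤ ‖(u : ℂ) + z‖) :
    ‖faIntegrand m w z u‖ ≤ ‖z - w‖ / (εw * εz) * u ^ (-2 : ℝ) := by
  have hu0 : 0 < u := (by positivity : (0 : ℝ) ≤ _).trans_lt hu
  have hw0 : 0 < ‖(u : ℂ) + w‖ := (by positivity : 0 < εw * u).trans_le hw
  have hz0 : 0 < ‖(u : ℂ) + z‖ := (by positivity : 0 < εz * u).trans_le hz
  have hsqrt : ‖(Real.sqrt (1 - 4 * m ^ 2 / u) : ℂ)‖ ≤ 1 := by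
    rw [norm_real, Real.norm_of_nonneg (Real.sqrt_nonneg _)]
    exact Real.sqrt_le_one.2 (sub_le_self _ (by positivity))
  have hdiff : 1 / ((u : ℂ) + w) - 1 / ((u : ℂ) + z) =
      (z - w) / (((u : ℂ) + w) * ((u : ℂ) + z)) := by
    rw [div_sub_div _ _ (norm_pos_iff.1 hw0) (norm_pos_iff.1 hz0)]
    ring
  calc ‖faIntegrand m w z u‖
      ≤ 1 * (‖z - w‖ / (‖(u : ℂ) + w‖ * ‖(u : ℂ) + z‖)) := by
        rw [faIntegrand, norm_mul, hdiff, norm_div, norm_mul]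
        gcongr
    _ ≤ ‖z - w‖ / ((εw * u) * (εz * u)) := by
        rw [one_mul]
        gcongr
    _ = ‖z - w‖ / (εw * εz) * u ^ (-2 : ℝ) := by
        rw [Real.rpow_neg hu0.le, Real.rpow_two]
        field_simp

lemma integrableOn_faIntegrand (hm : m ≠ 0) {w z : ℂ} (hw : w ∉ cutSet m) (hz : z ∉ cutSet m) :
    IntegrableOn (faIntegrand m w z) (Ioi (4 * m ^ 2)) := by
  obtain ⟨εw, hεw, hbw⟩ := exists_mul_le_norm_add hm hw
  obtain ⟨εz, hεz, hbz⟩ := exists_mul_le_norm_add hm hz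
  have hcont : ContinuousOn (faIntegrand m w z) (Ioi (4 * m ^ 2)) := by
    have hne : ∀ v ∉ cutSet m, ∀ u : ℝ, u ∈ Ioi (4 * m ^ 2) → (u : ℂ) + v ≠ 0 :=
      fun v hv u hu => add_ne_zero_of_notMem_cutSet hv (le_of_lt hu)
    have hu0 : ∀ u : ℝ, u ∈ Ioi (4 * m ^ 2) → u ≠ 0 :=
      fun u hu => ((by positivity : (0 : ℝ) ≤ _).trans_lt hu).ne'
    unfold faIntegrand
    fun_prop (disch := first | exact hne w hw | exact hne z hz | exact hu0)
  refine Integrable.mono' (((integrableOn_Ioi_rpow_iff (by positivity)).2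
    (by norm_num : (-2 : ℝ) < -1)).const_mul (‖z - w‖ / (εw * εz)))
    (hcont.aestronglyMeasurable measurableSet_Ioi) ?_
  exact (ae_restrict_iff' measurableSet_Ioi).2 (ae_of_all _ fun u hu =>
    norm_faIntegrand_le hu hεw hεz (hbw u hu) (hbz u hu))

noncomputable def faIntegrandReal (m w x u : ℝ) : ℝ :=
  Real.sqrt (1 - 4 * m ^ 2 / u) * (1 / (u + w) - 1 / (u + x))

noncomputable def faReal (m a x : ℝ) : ℝ :=
  ∫ u in Ioi (4 * m ^ 2), faIntegrandReal m a x u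

lemma ofReal_faIntegrandReal (w x u : ℝ) :
    (faIntegrandReal m w x u : ℂ) = faIntegrand m w x u := by
  simp [faIntegrandReal, faIntegrand]

lemma Fa_ofReal (a x : ℝ) : Fa m a x = faReal m a x := by
  simp_rw [Fa_eq_integral, faReal, ← ofReal_faIntegrandReal]
  exact integral_ofReal

lemma faReal_self (a : ℝ) : faReal m a a = 0 := by
  simp [faReal, faIntegrandReal]

lemma integrableOn_faIntegrandReal (hm : m ≠ 0) {w x : ℝ} (hw : -4 * m ^ 2 < w)
    (hx : -4 * m ^ 2 < x) : IntegrableOn (faIntegrandReal m w x) (Ioi (4 * m ^ 2)) := by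
  refine (integrableOn_faIntegrand hm (ofReal_notMem_cutSet_s18 hw) (ofReal_notMem_cutSet_s18 hx)).re.congr
    (ae_of_all _ fun u => ?_)
  simp [← ofReal_faIntegrandReal]

lemma setIntegral_pos_of_pos {X : Type*} [MeasurableSpace X] {μ : Measure X} {s : Set X}
    {f : X → ℝ} (hs : MeasurableSet s) (hμs : μ s ≠ 0) (hf : IntegrableOn f s μ)
    (hpos : ∀ x ∈ s, 0 < f x) : 0 < ∫ x in s, f x ∂μ := by
  rw [setIntegral_pos_iff_support_of_nonneg_ae
    ((ae_restrict_iff' hs).2 (ae_of_all _ fun x hx => (hpos x hx).le)) hf]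
  rwa [inter_eq_right.2 fun x hx => Function.mem_support.2 (hpos x hx).ne', pos_iff_ne_zero]

lemma faReal_strictMonoOn (hm : m ≠ 0) {a : ℝ} (ha : -4 * m ^ 2 < a) :
    StrictMonoOn (faReal m a) (Ioi (-4 * m ^ 2)) := by
  intro w hw x hx hwx
  have hdiff : faReal m a x - faReal m a w = ∫ u in Ioi (4 * m ^ 2), faIntegrandReal m w x u := by
    rw [faReal, faReal, ← integral_sub (integrableOn_faIntegrandReal hm ha hx)
      (integrableOn_faIntegrandReal hm ha hw)]
    congr 1 with u
    simp only [faIntegrandReal]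
    ring
  have hpos : 0 < ∫ u in Ioi (4 * m ^ 2), faIntegrandReal m w x u := by
    refine setIntegral_pos_of_pos measurableSet_Ioi (by simp)
      (integrableOn_faIntegrandReal hm hw hx) fun u hu => ?_
    have hu : 4 * m ^ 2 < u := hu
    have hw' : -4 * m ^ 2 < w := hw
    exact mul_pos (sqrt_one_sub_div_pos_s18 hu) (sub_pos.2 (one_div_lt_one_div_of_lt (by linarith)
      (by linarith)))
  linarith

lemma continuousOn_faReal (hm : m ≠ 0) {a c d : ℝ} (ha : -4 * m ^ 2 < a) (hc : -4 * m ^ 2 < c) :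
    ContinuousOn (faReal m a) (Icc c d) := by
  obtain ⟨εa, hεa, hba⟩ := exists_mul_le_norm_add hm (ofReal_notMem_cutSet_s18 ha)
  obtain ⟨εc, hεc, hbc⟩ := exists_mul_le_norm_add hm (ofReal_notMem_cutSet_s18 hc)
  have hnorm : ∀ u > 4 * m ^ 2, ∀ x, c ≤ x → ‖(u : ℂ) + x‖ = u + x := fun u hu x hx => by
    rw [← ofReal_add, norm_real, Real.norm_of_nonneg (by linarith)]
  refine continuousOn_of_dominated
    (bound := fun u => (|c - a| + (d - c)) / (εa * εc) * u ^ (-2 : ℝ))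
    (fun x hx => (integrableOn_faIntegrandReal hm ha (hc.trans_le hx.1)).aestronglyMeasurable)
    (fun x hx => (ae_restrict_iff' measurableSet_Ioi).2 (ae_of_all _ fun u hu => ?_))
    (((integrableOn_Ioi_rpow_iff (by positivity)).2 (by norm_num : (-2 : ℝ) < -1)).const_mul _)
    ((ae_restrict_iff' measurableSet_Ioi).2 (ae_of_all _ fun u hu => ?_))
  · have hεx : εc * u ≤ ‖(u : ℂ) + x‖ := by
      have := hbc u hu
      rw [hnorm u hu c le_rfl] at this
      rw [hnorm u hu x hx.1]
      linarith [hx.1]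
    have hxa : ‖(x : ℂ) - a‖ ≤ |c - a| + (d - c) := by
      rw [← ofReal_sub, norm_real, Real.norm_eq_abs]
      calc |x - a| ≤ |x - c| + |c - a| := abs_sub_le _ _ _
        _ ≤ |c - a| + (d - c) := by
          rw [abs_of_nonneg (sub_nonneg.2 hx.1)]
          linarith [hx.2]
    rw [← norm_real, ofReal_faIntegrandReal]
    refine (norm_faIntegrand_le hu hεa hεc (hba u hu) hεx).trans ?_
    gcongr
    exact Real.rpow_nonneg ((by positivity : (0 : ℝ) ≤ 4 * m ^ 2).trans (le_of_lt hu)) _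
  · have hu : 4 * m ^ 2 < u := hu
    unfold faIntegrandReal
    refine ContinuousOn.mul continuousOn_const (continuousOn_const.sub
      (continuousOn_const.div (by fun_prop) fun x hx => ?_))
    linarith [hx.1]

lemma im_mul_faIntegrand (a : ℝ) (z : ℂ) (u : ℝ) :
    z.im * (faIntegrand m a z u).im =
      z.im ^ 2 * Real.sqrt (1 - 4 * m ^ 2 / u) / normSq ((u : ℂ) + z) := by
  have ha : (u : ℂ) + a = ((u + a : ℝ) : ℂ) := by push_cast; rfl
  simp only [faIntegrand, im_ofReal_mul, sub_im, one_div, ha, ← ofReal_inv, ofReal_im, inv_im,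
    add_im, zero_add]
  ring

lemma im_mul_im_Fa_pos (hm : m ≠ 0) {a : ℝ} (ha : -4 * m ^ 2 < a) {z : ℂ} (hz : z ∉ cutSet m)
    (him : z.im ≠ 0) : 0 < z.im * (Fa m a z).im := by
  have hint := integrableOn_faIntegrand hm (ofReal_notMem_cutSet_s18 ha) hz
  have hFim : (Fa m a z).im = ∫ u in Ioi (4 * m ^ 2), (faIntegrand m a z u).im :=
    (integral_im hint).symm
  rw [hFim, ← integral_const_mul]
  refine setIntegral_pos_of_pos measurableSet_Ioi (by simp) (hint.im.const_mul _) fun u hu => ?_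
  rw [im_mul_faIntegrand]
  have := sqrt_one_sub_div_pos_s18 hu
  have := normSq_pos.2 (add_ne_zero_of_notMem_cutSet hz (le_of_lt hu))
  positivity

lemma exists_subset_pair_of_subsingleton {α : Type*} [LinearOrder α] {s : Set α} {c : α}
    (hc : c ∉ s) (hlt : (s ∩ Iio c).Subsingleton) (hgt : (s ∩ Ioi c).Subsingleton) :
    ∃ x y, s ⊆ {x, y} := by
  have hsingleton : ∀ t : Set α, t.Subsingleton → ∃ x, t ⊆ {x} := fun t ht => by
    rcases ht.eq_empty_or_singleton with rfl | ⟨x, rfl⟩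
    exacts [⟨c, empty_subset _⟩, ⟨x, subset_rfl⟩]
  obtain ⟨x, hx⟩ := hsingleton _ hlt
  obtain ⟨y, hy⟩ := hsingleton _ hgt
  refine ⟨x, y, fun z hz => ?_⟩
  rcases lt_trichotomy z c with h | rfl | h
  exacts [Or.inl (hx ⟨hz, h⟩), (hc hz).elim, Or.inr (hy ⟨hz, h⟩)]

variable {a κ g₁ g₂ l₁ l₂ : ℝ}

noncomputable def sReal (m a κ g₁ g₂ l₁ l₂ x : ℝ) : ℝ :=
  -(l₁ + l₂ * x) * κ * faReal m a x - (g₁ + g₂ * x)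

lemma Sfun_ofReal (x : ℝ) : Sfun m a κ g₁ g₂ l₁ l₂ x = sReal m a κ g₁ g₂ l₁ l₂ x := by
  simp [Sfun, sReal, Fa_ofReal]

lemma im_eq_zero_of_Sfun_eq_zero (hm : m ≠ 0) (ha : -4 * m ^ 2 < a) (hκ : 0 < κ) (hl₂ : l₂ ≠ 0)
    (hD : 0 ≤ g₂ * l₁ - l₂ * g₁) {z : ℂ} (hz : z ∉ cutSet m) (hS : Sfun m a κ g₁ g₂ l₁ l₂ z = 0) :
    z.im = 0 := by
  by_contra him
  have hF := im_mul_im_Fa_pos hm ha hz him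
  have hE : ((l₁ : ℂ) + l₂ * z) * κ * Fa m a z = -(g₁ + g₂ * z) := by
    rw [Sfun] at hS
    linear_combination -hS
  have hre := congrArg re hE
  have him' := congrArg im hE
  simp only [mul_re, mul_im, add_re, add_im, ofReal_re, ofReal_im, neg_re, neg_im,
    zero_mul, mul_zero, sub_zero, add_zero, zero_add] at hre him'
  -- `Im z` times the imaginary part of `conj L · L κ F_a(z) = -conj L · G`,
  -- where `L = λ₁ + λ₂ z` and `G = g₁ + g₂ z`
  have key : ((l₁ + l₂ * z.re) ^ 2 + (l₂ * z.im) ^ 2) * κ * (z.im * (Fa m a z).im)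
      = -(z.im ^ 2 * (g₂ * l₁ - l₂ * g₁)) := by
    linear_combination z.im * ((l₁ + l₂ * z.re) * him' - (l₂ * z.im) * hre)
  have : 0 < (l₂ * z.im) ^ 2 := by positivity
  have : 0 < ((l₁ + l₂ * z.re) ^ 2 + (l₂ * z.im) ^ 2) * κ * (z.im * (Fa m a z).im) := by
    positivity
  nlinarith [sq_nonneg z.im]

lemma sReal_neg (hm : m ≠ 0) (ha : -4 * m ^ 2 < a) (hκ : 0 < κ) {x : ℝ} (hax : a < x)
    (hL : 0 ≤ l₁ + l₂ * x) (hG : 0 < g₁ + g₂ * x) : sReal m a κ g₁ g₂ l₁ l₂ x < 0 := by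
  have hF : 0 < faReal m a x := by
    simpa [faReal_self] using faReal_strictMonoOn hm ha ha (ha.trans hax) hax
  have := mul_nonneg (mul_nonneg hL hκ.le) hF.le
  unfold sReal
  linarith

lemma eq_of_sReal_eq_zero (hm : m ≠ 0) (ha : -4 * m ^ 2 < a) (hκ : 0 < κ)
    (hD : 0 ≤ g₂ * l₁ - l₂ * g₁) {p q : ℝ} (hp : -4 * m ^ 2 < p) (hq : -4 * m ^ 2 < q)
    (hL : 0 < (l₁ + l₂ * p) * (l₁ + l₂ * q)) (hsp : sReal m a κ g₁ g₂ l₁ l₂ p = 0)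
    (hsq : sReal m a κ g₁ g₂ l₁ l₂ q = 0) : p = q := by
  wlog hpq : p < q generalizing p q
  · rcases (not_lt.1 hpq).eq_or_lt with h | h
    · exact h.symm
    · exact (this hq hp (by linarith) hsq hsp h).symm
  have hF := faReal_strictMonoOn hm ha hp hq hpq
  unfold sReal at hsp hsq
  have key : (l₁ + l₂ * p) * (l₁ + l₂ * q) * κ * (faReal m a q - faReal m a p)
      = -((q - p) * (g₂ * l₁ - l₂ * g₁)) := by
    linear_combination (l₁ + l₂ * q) * hsp - (l₁ + l₂ * p) * hsq
  have : 0 < (l₁ + l₂ * p) * (l₁ + l₂ * q) * κ * (faReal m a q - faReal m a p) :=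
    mul_pos (mul_pos hL hκ) (sub_pos.2 hF)
  nlinarith [mul_nonneg (sub_pos.2 hpq).le hD]

lemma exists_sReal_eq_zero (hm : m ≠ 0) {c : ℝ} (hc : -4 * m ^ 2 < c) (hca : c ≤ a)
    (hLc : l₁ + l₂ * c = 0) (hGc : g₁ + g₂ * c < 0) (hGa : 0 < g₁ + g₂ * a) :
    ∃ x ∈ Icc c a, sReal m a κ g₁ g₂ l₁ l₂ x = 0 := by
  have hF := continuousOn_faReal hm (d := a) (hc.trans_le hca) hc
  have hS : ContinuousOn (sReal m a κ g₁ g₂ l₁ l₂) (Icc c a) := by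
    unfold sReal
    fun_prop
  refine intermediate_value_Icc' hca hS ⟨?_, ?_⟩
  · simp [sReal, faReal_self]
    linarith
  · simp [sReal, hLc]
    linarith

lemma exists_sReal_zeros_subset_pair (hm : m ≠ 0) (ha : -4 * m ^ 2 < a) (hκ : 0 < κ)
    (hl₂ : 0 < l₂) (hD : 0 ≤ g₂ * l₁ - l₂ * g₁) (hGc : g₁ + g₂ * (-l₁ / l₂) ≠ 0) :
    ∃ x y, {x | -4 * m ^ 2 < x ∧ sReal m a κ g₁ g₂ l₁ l₂ x = 0} ⊆ {x, y} := by
  have hL : ∀ x, l₁ + l₂ * x = l₂ * (x - -l₁ / l₂) := fun x => by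
    field_simp
    ring
  refine exists_subset_pair_of_subsingleton (c := -l₁ / l₂) ?_ ?_ ?_
  · rintro ⟨-, h⟩
    simp only [sReal, hL, sub_self, mul_zero, neg_zero, zero_mul, zero_sub, neg_eq_zero] at h
    exact hGc h
  · rintro p ⟨⟨hp, hsp⟩, hpc⟩ q ⟨⟨hq, hsq⟩, hqc⟩
    refine eq_of_sReal_eq_zero hm ha hκ hD hp hq ?_ hsp hsq
    rw [hL, hL]
    exact mul_pos_of_neg_of_neg (mul_neg_of_pos_of_neg hl₂ (sub_neg.2 hpc))
      (mul_neg_of_pos_of_neg hl₂ (sub_neg.2 hqc))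
  · rintro p ⟨⟨hp, hsp⟩, hpc⟩ q ⟨⟨hq, hsq⟩, hqc⟩
    refine eq_of_sReal_eq_zero hm ha hκ hD hp hq ?_ hsp hsq
    rw [hL, hL]
    exact mul_pos (mul_pos hl₂ (sub_pos.2 hpc)) (mul_pos hl₂ (sub_pos.2 hqc))

lemma mem_image_ofReal_of_Sfun_eq_zero (hm : m ≠ 0) (ha : -4 * m ^ 2 < a) (hκ : 0 < κ)
    (hl₂ : l₂ ≠ 0) (hD : 0 ≤ g₂ * l₁ - l₂ * g₁) {z : ℂ} (hz : z ∉ cutSet m)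
    (hS : Sfun m a κ g₁ g₂ l₁ l₂ z = 0) :
    z ∈ ((↑) : ℝ → ℂ) '' {x | -4 * m ^ 2 < x ∧ sReal m a κ g₁ g₂ l₁ l₂ x = 0} := by
  have hz_eq : (z.re : ℂ) = z := ext rfl (im_eq_zero_of_Sfun_eq_zero hm ha hκ hl₂ hD hz hS).symm
  refine ⟨z.re, ⟨?_, ?_⟩, hz_eq⟩
  · by_contra h
    exact hz ⟨by simpa using congrArg im hz_eq.symm, not_lt.1 h⟩
  · rw [hz_eq.symm, Sfun_ofReal] at hS
    exact_mod_cast hS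

end

theorem stmt_18 (m a lam hb κ g₁ g₂ l₁ l₂ : ℝ) (hm : 0 < m)
    (hlam : 0 < lam) (hhb : 0 < hb) (hκ : κ = lam * hb / (16 * Real.pi ^ 2))
    (hg₁ : 0 < g₁) (hg₂ : 0 < g₂) (hl₁ : 0 < l₁) (hl₂ : 0 < l₂)
    (hineq : 0 ≤ g₂ * l₁ - l₂ * g₁)
    (h1 : -4 * m ^ 2 < -l₁ / l₂) (h2 : -l₁ / l₂ < -g₁ / g₂) (h3 : -g₁ / g₂ < a)
    (h4 : a < 0) :
    (∀ z : ℂ, z ∉ cutSet m → Sfun m a κ g₁ g₂ l₁ l₂ z = 0 →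
      z.im = 0 ∧ -4 * m ^ 2 < z.re ∧ z.re < 0) ∧
    (∃ z₁ z₂ : ℂ, {z : ℂ | z ∉ cutSet m ∧ Sfun m a κ g₁ g₂ l₁ l₂ z = 0} ⊆ {z₁, z₂}) ∧
    {z : ℂ | z ∉ cutSet m ∧ Sfun m a κ g₁ g₂ l₁ l₂ z = 0}.Nonempty := by
  have hκ0 : 0 < κ := by
    rw [hκ]
    positivity
  have ha : -4 * m ^ 2 < a := h1.trans (h2.trans h3)
  have hGc : g₁ + g₂ * (-l₁ / l₂) < 0 := by
    linarith [(lt_div_iff₀ hg₂).1 h2]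
  have hGa : 0 < g₁ + g₂ * a := by
    linarith [(div_lt_iff₀ hg₂).1 h3]
  have hzeros := fun z => mem_image_ofReal_of_Sfun_eq_zero (z := z) hm.ne' ha hκ0 hl₂.ne' hineq
  refine ⟨fun z hz hS => ?_, ?_, ?_⟩
  · obtain ⟨x, ⟨hx, hSx⟩, rfl⟩ := hzeros z hz hS
    refine ⟨ofReal_im x, hx, not_le.1 fun hx0 => ?_⟩
    exact (sReal_neg hm.ne' ha hκ0 (h4.trans_le hx0) (by positivity) (by positivity)).ne hSx
  · obtain ⟨x, y, hxy⟩ := exists_sReal_zeros_subset_pair hm.ne' ha hκ0 hl₂ hineq hGc.ne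
    refine ⟨x, y, fun z ⟨hz, hS⟩ => ?_⟩
    obtain ⟨w, hw, rfl⟩ := hzeros z hz hS
    rcases hxy hw with rfl | rfl <;> simp
  · obtain ⟨x, hx, hSx⟩ := exists_sReal_eq_zero (κ := κ) (l₁ := l₁) (l₂ := l₂) hm.ne' h1
      (h2.trans h3).le (by field_simp; ring) hGc hGa
    exact ⟨x, ofReal_notMem_cutSet_s18 (h1.trans_le hx.1), by rw [Sfun_ofReal, hSx, ofReal_zero]⟩
end
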